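/- arXiv:2006.06441 — 7 statements merged into one kernel-verified Lean document; each statement's English description precedes it below -/
import Mathlib

section
/- Let k ≥ 2. The function s_k(r) := 4(1−r) − r^{k−1}(1 − 2r + 5r²) has exactly one root in the open interval (0,1); equivalently, there is a unique R_k ∈ (0,1) with s_k(R_k) = 0, and moreover s_k is strictly decreasing on [0,1]. -/
/-!
Write `g r = 1 - 2r + 5r²`, which is positive everywhere. For `0 ≤ a < b ≤ 1` and `n = k - 1`,
`b^n g(b) - a^n g(a) = (b^n - a^n) g(a) + b^n (b - a)(5(a + b) - 2) ≥ -2(b - a)`,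
so the drop `4(b - a)` of the linear part dominates and `s_k` is strictly decreasing on `[0,1]`.
Since `s_k(0) > 0 > s_k(1) = -4`, the intermediate value theorem gives a root in `(0,1)`,
unique by strict monotonicity.
-/

open Set

/-- `bohrS n` is the paper's `s_{n+1}`. -/
def bohrS (n : ℕ) (r : ℝ) : ℝ :=
  4 * (1 - r) - r ^ n * (1 - 2 * r + 5 * r ^ 2)

theorem StrictAntiOn.existsUnique_mem_Ioo_eq
    {α δ : Type*} [ConditionallyCompleteLinearOrder α] [TopologicalSpace α] [OrderTopology α]
    [DenselyOrdered α] [LinearOrder δ] [TopologicalSpace δ] [OrderClosedTopology δ]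
    {f : α → δ} {a b : α} {y : δ} (hab : a ≤ b) (hf : StrictAntiOn f (Icc a b))
    (hc : ContinuousOn f (Icc a b)) (hy : y ∈ Ioo (f b) (f a)) :
    ∃! x, x ∈ Ioo a b ∧ f x = y := by
  obtain ⟨x, hx, hfx⟩ := intermediate_value_Ioo' hab hc hy
  refine ⟨x, ⟨hx, hfx⟩, fun z ⟨hz, hfz⟩ => ?_⟩
  exact hf.injOn (Ioo_subset_Icc_self hz) (Ioo_subset_Icc_self hx) (hfz.trans hfx.symm)

theorem one_sub_two_mul_add_five_mul_sq_pos (r : ℝ) : 0 < 1 - 2 * r + 5 * r ^ 2 := by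
  nlinarith [sq_nonneg (5 * r - 1)]

theorem strictAntiOn_bohrS (n : ℕ) : StrictAntiOn (bohrS n) (Icc 0 1) := by
  rintro a ⟨ha0, -⟩ b ⟨hb0, hb1⟩ hab
  have hpow : a ^ n ≤ b ^ n := pow_le_pow_left₀ ha0 hab.le n
  have hbn : b ^ n ≤ 1 := pow_le_one₀ hb0 hb1
  have hnonlin : -2 * (b - a) ≤
      b ^ n * (1 - 2 * b + 5 * b ^ 2) - a ^ n * (1 - 2 * a + 5 * a ^ 2) := by
    nlinarith [mul_nonneg (sub_nonneg.2 hpow) (one_sub_two_mul_add_five_mul_sq_pos a).le,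
      mul_nonneg (sub_nonneg.2 hbn) (sub_nonneg.2 hab.le),
      mul_nonneg (pow_nonneg hb0 n) (mul_nonneg (sub_nonneg.2 hab.le) (add_nonneg ha0 hb0))]
  unfold bohrS
  linarith

theorem continuous_bohrS (n : ℕ) : Continuous (bohrS n) := by
  unfold bohrS
  fun_prop

theorem bohrS_zero_pos (n : ℕ) : 0 < bohrS n 0 := by
  have : (0 : ℝ) ^ n ≤ 1 := pow_le_one₀ le_rfl zero_le_one
  simp only [bohrS]
  linarith

theorem bohrS_one (n : ℕ) : bohrS n 1 = -4 := by
  norm_num [bohrS]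

theorem bohr_stmt1_general (k : ℕ) :
    (∃! R : ℝ, R ∈ Set.Ioo (0 : ℝ) 1 ∧
      4 * (1 - R) - R ^ (k - 1) * (1 - 2 * R + 5 * R ^ 2) = 0) ∧
    StrictAntiOn (fun r : ℝ => 4 * (1 - r) - r ^ (k - 1) * (1 - 2 * r + 5 * r ^ 2))
      (Set.Icc (0 : ℝ) 1) := by
  have hanti := strictAntiOn_bohrS (k - 1)
  have hsign : (0 : ℝ) ∈ Ioo (bohrS (k - 1) 1) (bohrS (k - 1) 0) :=
    ⟨by rw [bohrS_one]; norm_num, bohrS_zero_pos _⟩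
  exact ⟨hanti.existsUnique_mem_Ioo_eq zero_le_one (continuous_bohrS _).continuousOn hsign, hanti⟩

/-- For `k ≥ 2`, the function `s_k(r) = 4(1−r) − r^{k−1}(1−2r+5r²)` has exactly one root
in `(0,1)`, and is strictly decreasing on `[0,1]`. -/
theorem bohr_stmt1 (k : ℕ) (hk : 2 ≤ k) :
    (∃! R : ℝ, R ∈ Set.Ioo (0 : ℝ) 1 ∧
      4 * (1 - R) - R ^ (k - 1) * (1 - 2 * R + 5 * R ^ 2) = 0) ∧
    StrictAntiOn (fun r : ℝ => 4 * (1 - r) - r ^ (k - 1) * (1 - 2 * r + 5 * r ^ 2))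
      (Set.Icc (0 : ℝ) 1) :=
  bohr_stmt1_general k
end

section
/- Let k ≥ 2. The bound R_k in Theorem 1 is sharp: for every r ∈ (R_k, 1) there exists f ∈ 𝓑_k with Taylor coefficients (a_n) such that ∑_{n=k}^∞ |a_n| r^n + ( r^{−k}/(1+|a_k|) + r^{1−k}/(1−r) ) · ∑_{n=k+1}^∞ |a_n|² r^{2n} > 1. Concretely, for a ∈ [0,1] and f(z) = z^k (a−z)/(1−az) ∈ 𝓑_k, the left-hand side above equals a r^k + r^{k+1}(1−a²)/(1−r), and with a = (1−R_k)/(2R_k) this expression equals 1 at r = R_k and exceeds 1 for r > R_k. -/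
/-!
The extremal function is `z ↦ z^k (a - z) / (1 - a z)`: its coefficients are `a` at `k` and
`-(1 - a²) aⁿ` at `k + n + 1`, so both series of the Bohr-type functional are geometric and it sums
to the majorant `a r^k + r^(k+1) (1 - a²) / (1 - r)`. For `a = (1 - R) / (2R)` the majorant at
`r = R` is `R^(k-1) (1 - 2R + 5R²) / (4 (1 - R))`, which is `1` precisely by the equation defining
`R_k`, and it is strictly increasing in `r`, so it exceeds `1` on `(R_k, 1)`. This `a` lies in
`(0, 1)` because `R^(k-1) ≤ R` for `k ≥ 2` forces `R_k > 1/3`.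
-/

open Complex Set

noncomputable def blaschkeCoeff (k : ℕ) (a : ℝ) (n : ℕ) : ℂ :=
  if n < k then 0 else if n = k then a else ((-((1 - a ^ 2) * a ^ (n - (k + 1))) : ℝ) : ℂ)

section Coefficients

variable (k : ℕ) (a : ℝ)

theorem blaschkeCoeff_of_lt {n : ℕ} (hn : n < k) : blaschkeCoeff k a n = 0 := by
  simp [blaschkeCoeff, hn]

theorem blaschkeCoeff_self : blaschkeCoeff k a k = a := by
  simp [blaschkeCoeff]

theorem blaschkeCoeff_add_succ (n : ℕ) :
    blaschkeCoeff k a (n + k + 1) = ((-((1 - a ^ 2) * a ^ n) : ℝ) : ℂ) := by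
  rw [blaschkeCoeff, if_neg (by omega), if_neg (by omega), Nat.add_sub_add_right,
    Nat.add_sub_cancel]

variable {a}

theorem norm_blaschkeCoeff_self (ha : 0 ≤ a) : ‖blaschkeCoeff k a k‖ = a := by
  rw [blaschkeCoeff_self, norm_real, Real.norm_of_nonneg ha]

theorem norm_blaschkeCoeff_add_succ (ha₀ : 0 ≤ a) (ha₁ : a ≤ 1) (n : ℕ) :
    ‖blaschkeCoeff k a (n + k + 1)‖ = (1 - a ^ 2) * a ^ n := by
  rw [blaschkeCoeff_add_succ, norm_real, norm_neg, Real.norm_of_nonneg]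
  have : 0 ≤ 1 - a ^ 2 := by nlinarith
  positivity

end Coefficients

theorem norm_ofReal_mul_lt_one {a : ℝ} (ha : |a| ≤ 1) {z : ℂ} (hz : ‖z‖ < 1) :
    ‖(a : ℂ) * z‖ < 1 := by
  rw [norm_mul, norm_real, Real.norm_eq_abs]
  exact mul_lt_one_of_nonneg_of_lt_one_right ha (norm_nonneg z) hz

theorem hasSum_blaschkeCoeff_mul_pow (k : ℕ) {a : ℝ} (ha : |a| ≤ 1) {z : ℂ} (hz : ‖z‖ < 1) :
    HasSum (fun n => blaschkeCoeff k a n * z ^ n) (z ^ k * ((a - z) / (1 - a * z))) := by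
  have haz := norm_ofReal_mul_lt_one ha hz
  have hden : 1 - (a : ℂ) * z ≠ 0 := sub_ne_zero.2 fun h => by simp [← h] at haz
  have htail : HasSum (fun n => blaschkeCoeff k a (n + 1 + k) * z ^ (n + 1 + k))
      (-(1 - (a : ℂ) ^ 2) * z ^ (k + 1) * (1 - a * z)⁻¹) := by
    refine ((hasSum_geometric_of_norm_lt_one haz).mul_left
      (-(1 - (a : ℂ) ^ 2) * z ^ (k + 1))).congr_fun fun n => ?_
    rw [add_right_comm n 1 k, blaschkeCoeff_add_succ]
    push_cast
    ring
  have hhead : ∑ i ∈ Finset.range k, blaschkeCoeff k a i * z ^ i = 0 :=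
    Finset.sum_eq_zero fun i hi => by rw [blaschkeCoeff_of_lt k a (Finset.mem_range.1 hi), zero_mul]
  have hval : z ^ k * ((a - z) / (1 - a * z))
      = a * z ^ k + -(1 - (a : ℂ) ^ 2) * z ^ (k + 1) * (1 - a * z)⁻¹ := by
    field_simp
    ring
  have h := HasSum.zero_add (f := fun n => blaschkeCoeff k a (n + k) * z ^ (n + k)) htail
  rw [zero_add, blaschkeCoeff_self] at h
  rwa [← hasSum_nat_add_iff' k, hhead, sub_zero, hval]

theorem norm_sub_le_norm_one_sub_mul {a : ℝ} (ha : |a| ≤ 1) {z : ℂ} (hz : ‖z‖ ≤ 1) :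
    ‖(a : ℂ) - z‖ ≤ ‖1 - a * z‖ := by
  have key : normSq (1 - a * z) - normSq (a - z) = (1 - a ^ 2) * (1 - normSq z) := by
    simp only [normSq_apply, sub_re, sub_im, one_re, one_im, mul_re, mul_im, ofReal_re, ofReal_im]
    ring
  have h₁ : 0 ≤ 1 - a ^ 2 := by nlinarith [sq_abs a, abs_nonneg a]
  have h₂ : 0 ≤ 1 - normSq z := by rw [← Complex.sq_norm]; nlinarith [norm_nonneg z]
  rw [← sq_le_sq₀ (norm_nonneg _) (norm_nonneg _), Complex.sq_norm, Complex.sq_norm]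
  nlinarith [mul_nonneg h₁ h₂]

theorem norm_pow_mul_blaschke_le_one (k : ℕ) {a : ℝ} (ha : |a| ≤ 1) {z : ℂ} (hz : ‖z‖ < 1) :
    ‖z ^ k * ((a - z) / (1 - a * z))‖ ≤ 1 := by
  rw [norm_mul, norm_pow, norm_div]
  exact mul_le_one₀ (pow_le_one₀ (norm_nonneg z) hz.le) (by positivity)
    (div_le_one_of_le₀ (norm_sub_le_norm_one_sub_mul ha hz.le) (norm_nonneg _))

section Majorant

variable (k : ℕ) {a r : ℝ}

theorem hasSum_blaschke_tail (h : |a * r| < 1) :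
    HasSum (fun n => (1 - a ^ 2) * a ^ n * r ^ (n + k + 1))
      ((1 - a ^ 2) * r ^ (k + 1) / (1 - a * r)) := by
  rw [div_eq_mul_inv]
  exact ((hasSum_geometric_of_abs_lt_one h).mul_left _).congr_fun fun n => by ring

theorem hasSum_blaschke_tail_sq (h : |a * r| < 1) :
    HasSum (fun n => ((1 - a ^ 2) * a ^ n) ^ 2 * r ^ (2 * n + 2 * k + 2))
      ((1 - a ^ 2) ^ 2 * r ^ (2 * k + 2) / (1 - (a * r) ^ 2)) := by
  have h2 : |(a * r) ^ 2| < 1 := by rw [abs_pow]; exact pow_lt_one₀ (abs_nonneg _) h two_ne_zero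
  rw [div_eq_mul_inv]
  exact ((hasSum_geometric_of_abs_lt_one h2).mul_left _).congr_fun fun n => by ring

theorem bohr_sum_blaschke_eq (ha : a ∈ Icc 0 1) (hr : r ∈ Ioo 0 1) :
    (a * r ^ k + ∑' n : ℕ, (1 - a ^ 2) * a ^ n * r ^ (n + k + 1)) +
        (r ^ (-(k : ℤ)) / (1 + a) + r ^ (1 - (k : ℤ)) / (1 - r)) *
          (∑' n : ℕ, ((1 - a ^ 2) * a ^ n) ^ 2 * r ^ (2 * n + 2 * k + 2))
      = a * r ^ k + r ^ (k + 1) * (1 - a ^ 2) / (1 - r) := by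
  obtain ⟨ha₀, ha₁⟩ := ha
  obtain ⟨hr₀, hr₁⟩ := hr
  have har : a * r < 1 := by nlinarith
  have har' : |a * r| < 1 := by rwa [abs_of_nonneg (by positivity)]
  have h1 : 1 - a * r ≠ 0 := by linarith
  have h2 : 1 + a ≠ 0 := by linarith
  have h3 : 1 - r ≠ 0 := by linarith
  have h4 : 1 - a ^ 2 * r ^ 2 ≠ 0 := by
    rw [← mul_pow]; exact (sub_pos.2 (pow_lt_one₀ (by positivity) har two_ne_zero)).ne'
  rw [(hasSum_blaschke_tail k har').tsum_eq, (hasSum_blaschke_tail_sq k har').tsum_eq, zpow_neg,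
    zpow_sub₀ hr₀.ne', zpow_one, zpow_natCast]
  field_simp
  ring

theorem blaschke_majorant_self_eq (hk : k ≠ 0) {R : ℝ} (hR₀ : 0 < R) (hR₁ : R < 1) :
    (1 - R) / (2 * R) * R ^ k + R ^ (k + 1) * (1 - ((1 - R) / (2 * R)) ^ 2) / (1 - R)
      = R ^ (k - 1) * (1 - 2 * R + 5 * R ^ 2) / (4 * (1 - R)) := by
  obtain ⟨m, rfl⟩ : ∃ m, k = m + 1 := ⟨k - 1, by omega⟩
  have : 1 - R ≠ 0 := by linarith
  rw [Nat.add_sub_cancel]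
  field_simp
  ring

theorem strictMonoOn_blaschke_majorant (hk : k ≠ 0) (ha₀ : 0 < a) (ha₁ : a ≤ 1) :
    StrictMonoOn (fun r => a * r ^ k + r ^ (k + 1) * (1 - a ^ 2) / (1 - r)) (Ico 0 1) := by
  rintro r ⟨hr₀, -⟩ s ⟨-, hs₁⟩ hrs
  have ha : 0 ≤ 1 - a ^ 2 := by nlinarith
  have hs : 0 < 1 - s := by linarith
  have hnum : 0 ≤ s ^ (k + 1) * (1 - a ^ 2) := mul_nonneg (pow_nonneg (hr₀.trans hrs.le) _) ha
  have hfirst : a * r ^ k < a * s ^ k := by gcongr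
  have hsecond : r ^ (k + 1) * (1 - a ^ 2) / (1 - r) ≤ s ^ (k + 1) * (1 - a ^ 2) / (1 - s) := by
    gcongr
  exact add_lt_add_of_lt_of_le hfirst hsecond

end Majorant

theorem one_third_lt_of_root {k : ℕ} (hk : 2 ≤ k) {R : ℝ} (hR : R ∈ Ioo (0 : ℝ) 1)
    (hroot : 4 * (1 - R) - R ^ (k - 1) * (1 - 2 * R + 5 * R ^ 2) = 0) : 1 / 3 < R := by
  obtain ⟨hR₀, hR₁⟩ := hR
  by_contra! h
  have hpow : R ^ (k - 1) ≤ R := pow_le_of_le_one hR₀.le hR₁.le (by omega)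
  nlinarith [mul_le_mul_of_nonneg_right hpow (by nlinarith : (0 : ℝ) ≤ 1 - 2 * R + 5 * R ^ 2)]

theorem bohr_sum_norm_blaschkeCoeff_eq (k : ℕ) {a r : ℝ} (ha : a ∈ Icc 0 1) (hr : r ∈ Ioo 0 1) :
    (∑' n : ℕ, ‖blaschkeCoeff k a (n + k)‖ * r ^ (n + k)) +
        (r ^ (-(k : ℤ)) / (1 + ‖blaschkeCoeff k a k‖) + r ^ (1 - (k : ℤ)) / (1 - r)) *
          (∑' n : ℕ, ‖blaschkeCoeff k a (n + k + 1)‖ ^ 2 * r ^ (2 * n + 2 * k + 2))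
      = a * r ^ k + r ^ (k + 1) * (1 - a ^ 2) / (1 - r) := by
  obtain ⟨ha₀, ha₁⟩ := ha
  have har : |a * r| < 1 := by
    rw [abs_of_nonneg (mul_nonneg ha₀ hr.1.le)]
    exact mul_lt_one_of_nonneg_of_lt_one_right ha₁ hr.1.le hr.2
  have htail : (fun n => ‖blaschkeCoeff k a (n + 1 + k)‖ * r ^ (n + 1 + k))
      = fun n => (1 - a ^ 2) * a ^ n * r ^ (n + k + 1) := by
    funext n
    rw [add_right_comm n 1 k, norm_blaschkeCoeff_add_succ k ha₀ ha₁]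
  rw [tsum_eq_zero_add' (htail ▸ (hasSum_blaschke_tail k har).summable), htail, zero_add,
    norm_blaschkeCoeff_self k ha₀]
  simp only [norm_blaschkeCoeff_add_succ k ha₀ ha₁]
  exact bohr_sum_blaschke_eq k ⟨ha₀, ha₁⟩ hr

/-- Sharpness of `R_k` in Theorem 1: beyond `R_k` the inequality fails for some `f ∈ 𝓑_k`;
concretely for `f(z) = z^k (a−z)/(1−az)` the left-hand side equals
`a r^k + r^{k+1}(1−a²)/(1−r)`, and with `a = (1−R_k)/(2R_k)` this equals `1` at `r = R_k`
and exceeds `1` for `r > R_k`. -/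
theorem bohr_stmt3 (k : ℕ) (hk : 2 ≤ k) (R : ℝ) (hR : R ∈ Set.Ioo (0 : ℝ) 1)
    (hroot : 4 * (1 - R) - R ^ (k - 1) * (1 - 2 * R + 5 * R ^ 2) = 0) :
    (∀ r ∈ Set.Ioo R 1, ∃ (f : ℂ → ℂ) (a : ℕ → ℂ),
      (∀ z : ℂ, ‖z‖ < 1 → HasSum (fun n : ℕ => a n * z ^ n) (f z)) ∧
      (∀ z : ℂ, ‖z‖ < 1 → ‖f z‖ ≤ 1) ∧
      (∀ n < k, a n = 0) ∧
      1 < (∑' n : ℕ, ‖a (n + k)‖ * r ^ (n + k)) +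
        (r ^ (-(k : ℤ)) / (1 + ‖a k‖) + r ^ (1 - (k : ℤ)) / (1 - r)) *
          (∑' n : ℕ, ‖a (n + k + 1)‖ ^ 2 * r ^ (2 * n + 2 * k + 2))) ∧
    (∀ a ∈ Set.Icc (0 : ℝ) 1, ∀ r ∈ Set.Ioo (0 : ℝ) 1,
      (a * r ^ k + ∑' n : ℕ, (1 - a ^ 2) * a ^ n * r ^ (n + k + 1)) +
        (r ^ (-(k : ℤ)) / (1 + a) + r ^ (1 - (k : ℤ)) / (1 - r)) *
          (∑' n : ℕ, ((1 - a ^ 2) * a ^ n) ^ 2 * r ^ (2 * n + 2 * k + 2))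
        = a * r ^ k + r ^ (k + 1) * (1 - a ^ 2) / (1 - r)) ∧
    ((1 - R) / (2 * R) * R ^ k +
        R ^ (k + 1) * (1 - ((1 - R) / (2 * R)) ^ 2) / (1 - R) = 1) ∧
    (∀ r ∈ Set.Ioo R 1,
      1 < (1 - R) / (2 * R) * r ^ k +
        r ^ (k + 1) * (1 - ((1 - R) / (2 * R)) ^ 2) / (1 - r)) := by
  have hR₃ := one_third_lt_of_root hk hR hroot
  obtain ⟨hR₀, hR₁⟩ := hR
  set q := (1 - R) / (2 * R)
  have hq₀ : 0 < q := div_pos (by linarith) (by linarith)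
  have hq₁ : q < 1 := (div_lt_one (by linarith)).2 (by linarith)
  have hvalue : q * R ^ k + R ^ (k + 1) * (1 - q ^ 2) / (1 - R) = 1 := by
    rw [blaschke_majorant_self_eq k (by omega) hR₀ hR₁, div_eq_one_iff_eq (by linarith)]
    linarith
  have hbeyond : ∀ r ∈ Ioo R 1, 1 < q * r ^ k + r ^ (k + 1) * (1 - q ^ 2) / (1 - r) :=
    fun r hr => hvalue.symm.trans_lt <| strictMonoOn_blaschke_majorant k (by omega) hq₀ hq₁.le
      ⟨hR₀.le, hR₁⟩ ⟨(hR₀.trans hr.1).le, hr.2⟩ hr.1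
  refine ⟨fun r hr => ?_, fun a ha r hr => bohr_sum_blaschke_eq k ha hr, hvalue, hbeyond⟩
  have hq : |q| ≤ 1 := by rw [abs_of_pos hq₀]; exact hq₁.le
  refine ⟨_, blaschkeCoeff k q, fun z hz => hasSum_blaschkeCoeff_mul_pow k hq hz,
    fun z hz => norm_pow_mul_blaschke_le_one k hq hz, fun n hn => blaschkeCoeff_of_lt k q hn, ?_⟩
  rw [bohr_sum_norm_blaschkeCoeff_eq k ⟨hq₀.le, hq₁.le⟩ ⟨hR₀.trans hr.1, hr.2⟩]
  exact hbeyond r hr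
end

section
/- Let k ≥ 2. There is no sequence (f_m) of functions in 𝓑_k, with Taylor coefficients f_m(z) = ∑_{n=k}^∞ a_{m,n} z^n, such that lim_{m→∞} ∑_{n=k}^∞ |a_{m,n}| R_k^n = 1. Equivalently, sup_{f ∈ 𝓑_k} ∑_{n=k}^∞ |a_n| R_k^n < 1. -/
/-!
On every circle of radius `ρ < 1` the function `f ∈ 𝓑` restricts to the trigonometric series
`∑ aₙ ρⁿ e(n x)` bounded by `1`, so Bessel's inequality in `L²` gives `∑ |aₙ|² ρ²ⁿ ≤ 1`; letting
`ρ → 1` yields `∑ |aₙ|² ≤ 1`. Cauchy–Schwarz then bounds `∑_{n ≥ k} |aₙ| Rⁿ` by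
`√(R^{2k} / (1 - R²))` uniformly in `f`. At `R = R_k` the root equation gives
`R^k = 4R(1 - R) / (1 - 2R + 5R²)` and forces `R > 1/2`, which makes this bound `< 1`.
-/

open Filter MeasureTheory Topology
open scoped InnerProductSpace

lemma summable_norm_mul_pow_of_summable {𝕜 : Type*} [NormedDivisionRing 𝕜] {a : ℕ → 𝕜} {z : 𝕜}
    (hz : Summable fun n => a n * z ^ n) {r : ℝ} (hr0 : 0 ≤ r) (hr : r < ‖z‖) :
    Summable fun n => ‖a n‖ * r ^ n := by
  have hz0 : 0 < ‖z‖ := hr0.trans_lt hr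
  obtain ⟨C, hC⟩ := hz.tendsto_atTop_zero.norm.isBoundedUnder_le.bddAbove_range
  refine Summable.of_nonneg_of_le (fun n => by positivity) (fun n => ?_)
    ((summable_geometric_of_lt_one (by positivity) ((div_lt_one hz0).2 hr)).mul_left C)
  have hCn : ‖a n‖ * ‖z‖ ^ n ≤ C := by
    simpa only [norm_mul, norm_pow] using hC (Set.mem_range_self n)
  calc ‖a n‖ * r ^ n = ‖a n‖ * ‖z‖ ^ n * (r / ‖z‖) ^ n := by
        rw [div_pow, mul_assoc, mul_div_cancel₀ _ (by positivity)]
    _ ≤ C * (r / ‖z‖) ^ n := by gcongr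

lemma fourier_natCast_eq_pow {T : ℝ} (n : ℕ) (x : AddCircle T) :
    fourier (n : ℤ) x = fourier 1 x ^ n := by
  induction n with
  | zero => simp
  | succ n ih => rw [Nat.cast_succ, fourier_add, ih, pow_succ]

lemma sum_norm_sq_le_of_norm_tsum_fourier_le {T : ℝ} [Fact (0 < T)] {c : ℕ → ℂ}
    (hc : Summable fun n => ‖c n‖) {M : ℝ}
    (hM : ∀ x : AddCircle T, ‖∑' n : ℕ, c n * fourier n x‖ ≤ M) (s : Finset ℕ) :
    ∑ n ∈ s, ‖c n‖ ^ 2 ≤ M ^ 2 := by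
  set g : ℕ → C(AddCircle T, ℂ) := fun n => c n • fourier n
  have hg : HasSum g (∑' n, g n) :=
    (Summable.of_norm (by simpa [g, norm_smul, fourier_norm] using hc)).hasSum
  set G := ∑' n, g n
  have hGx (x : AddCircle T) : HasSum (fun n => c n * fourier n x) (G x) :=
    hg.mapL (ContinuousMap.evalCLM ℂ x)
  have hGM : ‖G‖ ≤ M :=
    (ContinuousMap.norm_le_of_nonempty _).2 fun x => (hGx x).tsum_eq ▸ hM x
  set L := ContinuousMap.toLp (E := ℂ) 2 (AddCircle.haarAddCircle (T := T)) ℂ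
  have hLG : ‖L G‖ ≤ M := by
    have hL : ‖L‖ ≤ 1 := by
      simpa [measureUnivNNReal, measure_univ] using
        ContinuousMap.toLp_norm_le (E := ℂ) (p := 2) (𝕜 := ℂ) (AddCircle.haarAddCircle (T := T))
    calc ‖L G‖ ≤ ‖L‖ * ‖G‖ := L.le_opNorm G
      _ ≤ 1 * M := mul_le_mul hL hGM (norm_nonneg _) zero_le_one
      _ = M := one_mul M
  set v : ℕ → Lp ℂ 2 (AddCircle.haarAddCircle (T := T)) := fun n => fourierLp 2 n
  have hv : Orthonormal ℂ v := orthonormal_fourier.comp _ Nat.cast_injective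
  have hinner (n : ℕ) : ⟪v n, L G⟫_ℂ = c n := by
    have hterm (m : ℕ) : ⟪v n, L (g m)⟫_ℂ = if m = n then c n else 0 := by
      have hLg : L (g m) = c m • v m := map_smul L _ _
      rw [hLg, inner_smul_right, orthonormal_iff_ite.mp hv n m]
      rcases eq_or_ne m n with rfl | hmn
      · simp
      · simp [hmn, hmn.symm]
    have h := (hg.mapL L).mapL (innerSL ℂ (v n))
    simp only [innerSL_apply_apply, hterm] at h
    exact h.unique (hasSum_ite_eq n (c n))
  calc ∑ n ∈ s, ‖c n‖ ^ 2 = ∑ n ∈ s, ‖⟪v n, L G⟫_ℂ‖ ^ 2 := by simp only [hinner]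
    _ ≤ ‖L G‖ ^ 2 := hv.sum_inner_products_le _
    _ ≤ M ^ 2 := pow_le_pow_left₀ (norm_nonneg _) hLG 2

section DiskCoefficients

variable {f : ℂ → ℂ} {a : ℕ → ℂ}

lemma sum_sq_norm_mul_pow_le_one
    (hsum : ∀ z : ℂ, ‖z‖ < 1 → HasSum (fun n => a n * z ^ n) (f z))
    (hb : ∀ z : ℂ, ‖z‖ < 1 → ‖f z‖ ≤ 1) {ρ : ℝ} (hρ0 : 0 ≤ ρ) (hρ1 : ρ < 1)
    (s : Finset ℕ) : ∑ n ∈ s, (‖a n‖ * ρ ^ n) ^ 2 ≤ 1 := by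
  have hnorm (n : ℕ) : ‖a n * (ρ : ℂ) ^ n‖ = ‖a n‖ * ρ ^ n := by
    rw [norm_mul, norm_pow, Complex.norm_of_nonneg hρ0]
  have hsummable : Summable fun n => ‖a n * (ρ : ℂ) ^ n‖ := by
    have hmid : ‖(((1 + ρ) / 2 : ℝ) : ℂ)‖ < 1 := by
      rw [Complex.norm_of_nonneg (by linarith)]; linarith
    simpa only [hnorm] using summable_norm_mul_pow_of_summable (hsum _ hmid).summable hρ0
      (by rw [Complex.norm_of_nonneg (by linarith)]; linarith)
  have hcircle (x : AddCircle (1 : ℝ)) : ‖(ρ : ℂ) * fourier 1 x‖ < 1 := by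
    have hunit : ‖fourier 1 x‖ = 1 := Circle.norm_coe _
    rwa [norm_mul, Complex.norm_of_nonneg hρ0, hunit, mul_one]
  have hM (x : AddCircle (1 : ℝ)) :
      ‖∑' n : ℕ, a n * (ρ : ℂ) ^ n * fourier n x‖ ≤ 1 := by
    simp_rw [fourier_natCast_eq_pow, mul_assoc, ← mul_pow]
    rw [(hsum _ (hcircle x)).tsum_eq]
    exact hb _ (hcircle x)
  simpa only [hnorm, one_pow] using sum_norm_sq_le_of_norm_tsum_fourier_le hsummable hM s

lemma sum_sq_norm_le_one
    (hsum : ∀ z : ℂ, ‖z‖ < 1 → HasSum (fun n => a n * z ^ n) (f z))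
    (hb : ∀ z : ℂ, ‖z‖ < 1 → ‖f z‖ ≤ 1) (s : Finset ℕ) : ∑ n ∈ s, ‖a n‖ ^ 2 ≤ 1 := by
  have hlim : Tendsto (fun ρ : ℝ => ∑ n ∈ s, (‖a n‖ * ρ ^ n) ^ 2) (𝓝[<] 1)
      (𝓝 (∑ n ∈ s, (‖a n‖ * 1 ^ n) ^ 2)) :=
    ((continuous_finsetSum s fun n _ => by fun_prop).tendsto 1).mono_left nhdsWithin_le_nhds
  have hev : ∀ᶠ ρ in 𝓝[<] (1 : ℝ), ∑ n ∈ s, (‖a n‖ * ρ ^ n) ^ 2 ≤ 1 := by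
    filter_upwards [Ioo_mem_nhdsLT zero_lt_one] with ρ hρ
    exact sum_sq_norm_mul_pow_le_one hsum hb hρ.1.le hρ.2 s
  simpa using le_of_tendsto hlim hev

end DiskCoefficients

lemma tsum_norm_mul_pow_le_sqrt {E : Type*} [SeminormedAddCommGroup E] {a : ℕ → E}
    (ha : ∀ s : Finset ℕ, ∑ n ∈ s, ‖a n‖ ^ 2 ≤ 1) (k : ℕ) {R : ℝ} (hR0 : 0 ≤ R) (hR1 : R < 1) :
    ∑' n, ‖a (n + k)‖ * R ^ (n + k) ≤ √((R ^ 2) ^ k / (1 - R ^ 2)) := by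
  refine Real.tsum_le_of_sum_range_le (fun n => by positivity) fun N => ?_
  have hcoeff : ∑ n ∈ Finset.range N, ‖a (n + k)‖ ^ 2 ≤ 1 := by
    refine (Finset.sum_image (f := fun n => ‖a n‖ ^ 2) ?_).symm.trans_le (ha _)
    exact fun _ _ _ _ => Nat.add_right_cancel
  have hgeom : ∑ n ∈ Finset.range N, (R ^ (n + k)) ^ 2 ≤ (R ^ 2) ^ k / (1 - R ^ 2) := by
    calc ∑ n ∈ Finset.range N, (R ^ (n + k)) ^ 2
        = ∑ n ∈ Finset.Ico k (k + N), (R ^ 2) ^ n := by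
          rw [Finset.sum_Ico_eq_sum_range, Nat.add_sub_cancel_left]
          exact Finset.sum_congr rfl fun n _ => by ring
      _ ≤ (R ^ 2) ^ k / (1 - R ^ 2) :=
          geom_sum_Ico_le_of_lt_one (sq_nonneg R) (by nlinarith)
  calc ∑ n ∈ Finset.range N, ‖a (n + k)‖ * R ^ (n + k)
      ≤ √(∑ n ∈ Finset.range N, ‖a (n + k)‖ ^ 2) * √(∑ n ∈ Finset.range N, (R ^ (n + k)) ^ 2) :=
        Real.sum_mul_le_sqrt_mul_sqrt _ _ _
    _ ≤ 1 * √((R ^ 2) ^ k / (1 - R ^ 2)) := by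
        gcongr
        exact Real.sqrt_le_one.mpr hcoeff
    _ = √((R ^ 2) ^ k / (1 - R ^ 2)) := one_mul _

section BohrRoot

variable {k : ℕ} {R : ℝ}

lemma one_half_lt_of_root (hk : 2 ≤ k) (hR : R ∈ Set.Ioo (0 : ℝ) 1)
    (hroot : 4 * (1 - R) - R ^ (k - 1) * (1 - 2 * R + 5 * R ^ 2) = 0) : 1 / 2 < R := by
  obtain ⟨hR0, hR1⟩ := hR
  have hpow : R ^ (k - 1) ≤ R := pow_le_of_le_one hR0.le hR1.le (by omega)
  have hcubic : 4 * (1 - R) ≤ R * (1 - 2 * R + 5 * R ^ 2) := by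
    nlinarith [mul_le_mul_of_nonneg_right hpow (by nlinarith : (0 : ℝ) ≤ 1 - 2 * R + 5 * R ^ 2)]
  nlinarith [hcubic]

lemma sq_pow_lt_one_sub_sq_of_root (hk : 2 ≤ k) (hR : R ∈ Set.Ioo (0 : ℝ) 1)
    (hroot : 4 * (1 - R) - R ^ (k - 1) * (1 - 2 * R + 5 * R ^ 2) = 0) :
    (R ^ 2) ^ k < 1 - R ^ 2 := by
  have hhalf := one_half_lt_of_root hk hR hroot
  obtain ⟨hR0, hR1⟩ := hR
  set P := 1 - 2 * R + 5 * R ^ 2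
  have hP : 0 < P := by nlinarith [sq_nonneg (R - 1 / 5)]
  have hRk : R ^ k * P = 4 * R * (1 - R) := by
    rw [← Nat.sub_add_cancel (by omega : 1 ≤ k), pow_succ]
    linear_combination -R * hroot
  have hs : 0 < R - 1 / 2 := by linarith
  have hpoly : (4 * R * (1 - R)) ^ 2 < (1 - R ^ 2) * P ^ 2 := by
    nlinarith [mul_pos hs hs, mul_pos (mul_pos hs hs) hs,
      mul_pos (mul_pos (mul_pos hs hs) hs) hs,
      mul_pos (mul_pos (mul_pos (mul_pos hs hs) hs) hs) hs]
  rw [← hRk, mul_pow, ← pow_mul] at hpoly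
  rw [← pow_mul, mul_comm]
  exact lt_of_mul_lt_mul_right hpoly (sq_nonneg P)

end BohrRoot

/-- Remark 2 (first part): for `k ≥ 2`, the supremum over `f ∈ 𝓑_k` of
`∑_{n=k}^∞ |a_n| R_k^n` is strictly less than 1; equivalently, no sequence of functions
in `𝓑_k` has Bohr sums at `R_k` tending to 1. -/
theorem bohr_stmt5 (k : ℕ) (hk : 2 ≤ k) (R : ℝ) (hR : R ∈ Set.Ioo (0 : ℝ) 1)
    (hroot : 4 * (1 - R) - R ^ (k - 1) * (1 - 2 * R + 5 * R ^ 2) = 0) :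
    (∃ c : ℝ, c < 1 ∧ ∀ (f : ℂ → ℂ) (a : ℕ → ℂ),
      (∀ z : ℂ, ‖z‖ < 1 → HasSum (fun n : ℕ => a n * z ^ n) (f z)) →
      (∀ z : ℂ, ‖z‖ < 1 → ‖f z‖ ≤ 1) →
      (∀ n < k, a n = 0) →
      (∑' n : ℕ, ‖a (n + k)‖ * R ^ (n + k)) ≤ c) ∧
    ¬ ∃ (F : ℕ → ℂ → ℂ) (A : ℕ → ℕ → ℂ),
      (∀ m : ℕ,
        (∀ z : ℂ, ‖z‖ < 1 → HasSum (fun n : ℕ => A m n * z ^ n) (F m z)) ∧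
        (∀ z : ℂ, ‖z‖ < 1 → ‖F m z‖ ≤ 1) ∧
        (∀ n < k, A m n = 0)) ∧
      Filter.Tendsto (fun m : ℕ => ∑' n : ℕ, ‖A m (n + k)‖ * R ^ (n + k))
        Filter.atTop (nhds 1) := by
  set c := √((R ^ 2) ^ k / (1 - R ^ 2))
  have hc : c < 1 := by
    have hpos : 0 < 1 - R ^ 2 := by nlinarith [hR.1, hR.2]
    rw [Real.sqrt_lt' one_pos, one_pow, div_lt_one hpos]
    exact sq_pow_lt_one_sub_sq_of_root hk hR hroot
  have hbound : ∀ (f : ℂ → ℂ) (a : ℕ → ℂ),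
      (∀ z : ℂ, ‖z‖ < 1 → HasSum (fun n : ℕ => a n * z ^ n) (f z)) →
      (∀ z : ℂ, ‖z‖ < 1 → ‖f z‖ ≤ 1) →
      (∑' n : ℕ, ‖a (n + k)‖ * R ^ (n + k)) ≤ c := fun _ _ hsum hb =>
    tsum_norm_mul_pow_le_sqrt (sum_sq_norm_le_one hsum hb) k hR.1.le hR.2
  refine ⟨⟨c, hc, fun f a hsum hb _ => hbound f a hsum hb⟩, ?_⟩
  rintro ⟨F, A, hFA, hlim⟩
  exact hc.not_ge <| le_of_tendsto' hlim fun m => hbound (F m) (A m) (hFA m).1 (hFA m).2.1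
end

section
/- Let k ≥ 2. The bound S_k in Theorem 2 is sharp, witnessed by f(z) = z^k: for this function (whose coefficients are a_k = 1 and a_n = 0 for n > k), for every r ∈ (0,1) the quantity ∑_{n=k}^∞ |a_n| r^n + ( r^{−k}/(1+|a_k|) + r^{1−k}/(1−r) ) · ∑_{n=k}^∞ |a_n|² r^{2n} equals r^k(3−r)/(2(1−r)), which equals 1 at r = S_k and exceeds 1 for every r ∈ (S_k, 1). -/
/-! Both the equality at `S_k` and the strict inequality beyond it compare `r^k(3−r)` with
`2(1−r)`: the first increases and the second decreases on `(0,1)`, and they agree at `S_k`. -/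

lemma pow_succ_mul_three_sub_strictMonoOn (m : ℕ) :
    StrictMonoOn (fun r : ℝ => r ^ (m + 1) * (3 - r)) (Set.Icc 0 (3 / 2)) := by
  rintro s ⟨hs0, hs⟩ r ⟨hr0, hr⟩ hsr
  have hquad : s * (3 - s) < r * (3 - r) := by nlinarith
  calc s ^ (m + 1) * (3 - s) = s ^ m * (s * (3 - s)) := by ring
    _ ≤ r ^ m * (s * (3 - s)) := by gcongr; nlinarith
    _ < r ^ m * (r * (3 - r)) := by gcongr; exact pow_pos (hs0.trans_lt hsr) m
    _ = r ^ (m + 1) * (3 - r) := by ring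

lemma bohr_sum_monomial (k : ℕ) {r : ℝ} (hr0 : r ≠ 0) (hr1 : r ≠ 1) :
    r ^ k + (r ^ (-(k : ℤ)) / (1 + 1) + r ^ (1 - (k : ℤ)) / (1 - r)) * r ^ (2 * k)
      = r ^ k * (3 - r) / (2 * (1 - r)) := by
  have h1r : 1 - r ≠ 0 := sub_ne_zero.mpr hr1.symm
  rw [zpow_sub₀ hr0, zpow_neg, zpow_natCast, zpow_one, two_mul, pow_add]
  field_simp
  ring

/-- Sharpness of `S_k` in Theorem 2, witnessed by `f(z) = z^k` (coefficients `a_k = 1`,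
`a_n = 0` for `n > k`): for every `r ∈ (0,1)` the Bohr-type quantity equals
`r^k(3−r)/(2(1−r))`, which equals 1 at `r = S_k` and exceeds 1 on `(S_k, 1)`. -/
theorem bohr_stmt9 (k : ℕ) (hk : 2 ≤ k) (S : ℝ) (hS : S ∈ Set.Ioo (0 : ℝ) 1)
    (hroot : 2 * (1 - S) - S ^ k * (3 - S) = 0) :
    (∀ r ∈ Set.Ioo (0 : ℝ) 1,
      r ^ k + (r ^ (-(k : ℤ)) / (1 + 1) + r ^ (1 - (k : ℤ)) / (1 - r)) * r ^ (2 * k)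
        = r ^ k * (3 - r) / (2 * (1 - r))) ∧
    S ^ k * (3 - S) / (2 * (1 - S)) = 1 ∧
    (∀ r ∈ Set.Ioo S 1, 1 < r ^ k * (3 - r) / (2 * (1 - r))) := by
  obtain ⟨hS0, hS1⟩ := hS
  obtain ⟨m, rfl⟩ : ∃ m, k = m + 1 := ⟨k - 1, by omega⟩
  refine ⟨fun r hr => bohr_sum_monomial _ hr.1.ne' hr.2.ne, ?_, ?_⟩
  · rw [div_eq_one_iff_eq (by linarith)]
    linarith
  · rintro r ⟨hSr, hr1⟩
    have hincr : S ^ (m + 1) * (3 - S) < r ^ (m + 1) * (3 - r) :=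
      pow_succ_mul_three_sub_strictMonoOn m ⟨hS0.le, by linarith⟩ ⟨by linarith, by linarith⟩ hSr
    rw [one_lt_div (by linarith)]
    linarith
end

section
/- Let k ≥ 2 and let a ∈ (0,1] be fixed. The function u_{k,a}(r) := (1+a)(1−r) − r^k[2a² + a + r(1−2a²)] satisfies u_{k,a}(0) > 0, u_{k,a}(1) < 0, and u_{k,a}'(r) < 0 for all r ∈ [0,1]; consequently u_{k,a} has exactly one root ρ_k(a) in the open interval (0,1). -/
/-!
On `[0, 1]` the derivative of `u_{k,a}` is `-(1 + a) - r^(k-1) L(r)`, where `L` is affine in `r`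
and nonnegative at both endpoints, so `u_{k,a}` is strictly decreasing there. Since
`u_{k,a}(0) = 1 + a > 0 > -(1 + a) = u_{k,a}(1)`, the intermediate value theorem gives a root in
`(0, 1)`, and strict monotonicity makes it unique.
-/

open Set

theorem existsUnique_zero_of_strictAntiOn_Icc {f : ℝ → ℝ} {x y : ℝ} (hxy : x ≤ y)
    (hf : ContinuousOn f (Icc x y)) (hanti : StrictAntiOn f (Icc x y))
    (hx : 0 < f x) (hy : f y < 0) :
    ∃! z, z ∈ Ioo x y ∧ f z = 0 := by
  obtain ⟨z, hz, hfz⟩ := intermediate_value_Ioo' hxy hf ⟨hy, hx⟩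
  refine ⟨z, ⟨hz, hfz⟩, fun w ⟨hw, hfw⟩ => ?_⟩
  exact hanti.injOn (Ioo_subset_Icc_self hw) (Ioo_subset_Icc_self hz) (hfw.trans hfz.symm)

/-- The function `u_{k,a}`. -/
def bohrU (k : ℕ) (a r : ℝ) : ℝ :=
  (1 + a) * (1 - r) - r ^ k * (2 * a ^ 2 + a + r * (1 - 2 * a ^ 2))

namespace bohrU

variable {k : ℕ} {a : ℝ}

theorem apply_zero (hk : k ≠ 0) : bohrU k a 0 = 1 + a := by
  simp [bohrU, zero_pow hk]

theorem apply_one : bohrU k a 1 = -(1 + a) := by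
  simp only [bohrU]
  ring

theorem continuous : Continuous (bohrU k a) := by
  unfold bohrU
  fun_prop

theorem hasDerivAt (r : ℝ) :
    HasDerivAt (bohrU k a)
      (-(1 + a) - (k * r ^ (k - 1) * (2 * a ^ 2 + a + r * (1 - 2 * a ^ 2))
        + r ^ k * (1 - 2 * a ^ 2))) r := by
  have h := (((hasDerivAt_id r).const_sub 1).const_mul (1 + a)).sub
    ((hasDerivAt_pow k r).mul (((hasDerivAt_id r).mul_const (1 - 2 * a ^ 2)).const_add
      (2 * a ^ 2 + a)))
  exact h.congr_deriv (by simp only [id]; ring)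

theorem deriv_neg (hk : k ≠ 0) (ha : a ∈ Icc (0 : ℝ) 1) {r : ℝ} (hr : r ∈ Icc (0 : ℝ) 1) :
    deriv (bohrU k a) r < 0 := by
  obtain ⟨ha0, ha1⟩ := ha
  obtain ⟨hr0, hr1⟩ := hr
  rw [(hasDerivAt r).deriv]
  have hpow : r ^ k = r ^ (k - 1) * r := by
    rw [← pow_succ, Nat.sub_add_cancel (Nat.one_le_iff_ne_zero.mpr hk)]
  -- the bracket is affine in `r`; write it as a convex combination of its endpoint values
  have hsplit : (k : ℝ) * (2 * a ^ 2 + a + r * (1 - 2 * a ^ 2)) + r * (1 - 2 * a ^ 2)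
      = (1 - r) * (k * (2 * a ^ 2 + a)) + r * (k * a + (k - 1) + 2 * (1 - a ^ 2)) := by
    ring
  have hk1 : (1 : ℝ) ≤ k := by exact_mod_cast Nat.one_le_iff_ne_zero.mpr hk
  have hbracket : 0 ≤ (k : ℝ) * (2 * a ^ 2 + a + r * (1 - 2 * a ^ 2)) + r * (1 - 2 * a ^ 2) := by
    have ha2 : a ^ 2 ≤ 1 := pow_le_one₀ ha0 ha1
    rw [hsplit]
    have h1r : 0 ≤ 1 - r := sub_nonneg.mpr hr1
    have hk1' : (0 : ℝ) ≤ k - 1 := sub_nonneg.mpr hk1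
    have h1a : 0 ≤ 1 - a ^ 2 := sub_nonneg.mpr ha2
    positivity
  have hsum : 0 ≤ k * r ^ (k - 1) * (2 * a ^ 2 + a + r * (1 - 2 * a ^ 2))
      + r ^ k * (1 - 2 * a ^ 2) := by
    have := mul_nonneg (pow_nonneg hr0 (k - 1)) hbracket
    rw [hpow]
    linarith
  linarith

theorem strictAntiOn (hk : k ≠ 0) (ha : a ∈ Icc (0 : ℝ) 1) :
    StrictAntiOn (bohrU k a) (Icc 0 1) := by
  refine strictAntiOn_of_deriv_neg (convex_Icc 0 1) continuous.continuousOn fun r hr => ?_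
  rw [interior_Icc] at hr
  exact deriv_neg hk ha (Ioo_subset_Icc_self hr)

end bohrU

/-- For `k ≥ 2` and `a ∈ (0,1]`, `u_{k,a}(r) = (1+a)(1−r) − r^k(2a²+a+r(1−2a²))`
satisfies `u(0) > 0`, `u(1) < 0`, `u'(r) < 0` on `[0,1]`, and has exactly one root
`ρ_k(a)` in `(0,1)`. -/
theorem bohr_stmt10 (k : ℕ) (hk : 2 ≤ k) (a : ℝ) (ha : a ∈ Set.Ioc (0 : ℝ) 1)
    (u : ℝ → ℝ)
    (hu : u = fun r : ℝ => (1 + a) * (1 - r) - r ^ k * (2 * a ^ 2 + a + r * (1 - 2 * a ^ 2))) :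
    0 < u 0 ∧ u 1 < 0 ∧ (∀ r ∈ Set.Icc (0 : ℝ) 1, deriv u r < 0) ∧
    ∃! ρ : ℝ, ρ ∈ Set.Ioo (0 : ℝ) 1 ∧ u ρ = 0 := by
  have hu : u = bohrU k a := hu
  subst hu
  have hk : k ≠ 0 := by omega
  have ha : a ∈ Icc (0 : ℝ) 1 := Ioc_subset_Icc_self ha
  have hu0 : 0 < bohrU k a 0 := by rw [bohrU.apply_zero hk]; linarith [ha.1]
  have hu1 : bohrU k a 1 < 0 := by rw [bohrU.apply_one]; linarith [ha.1]
  exact ⟨hu0, hu1, fun r hr => bohrU.deriv_neg hk ha hr,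
    existsUnique_zero_of_strictAntiOn_Icc zero_le_one bohrU.continuous.continuousOn
      (bohrU.strictAntiOn hk ha) hu0 hu1⟩
end

section
/- Let k ≥ 2. Then S_k ≤ R_k, where S_k is the unique root in (0,1) of 2(1−r) − r^k(3−r) = 0 and R_k is the unique root in (0,1) of 4(1−r) − r^{k−1}(1 − 2r + 5r²) = 0. -/
/-!
On `[0,1]` the map `g r = r^k (3 - r)` is strictly increasing, and `S_k` is where it meets the
decreasing line `2(1 - r)`. So it suffices to show `2(1 - R) ≤ g R`. The defining equation of `R`
forces `R ≥ 3/5`; it also turns `2(1 - R)` into `R^(k-1)(1 - 2R + 5R²)/2`, and then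
`2(1 - R) ≤ g R` becomes `(7R - 1)(R - 1) ≤ 0`.
-/

open Set

lemma strictMonoOn_pow_mul_three_sub {k : ℕ} (hk : 1 ≤ k) :
    StrictMonoOn (fun x : ℝ => x ^ k * (3 - x)) (Icc 0 1) := by
  apply strictMonoOn_of_deriv_pos (convex_Icc 0 1) (by fun_prop)
  intro x hx
  rw [interior_Icc] at hx
  obtain ⟨hx0, hx1⟩ := hx
  obtain ⟨n, rfl⟩ := Nat.exists_eq_add_of_le' hk
  have hderiv : HasDerivAt (fun x : ℝ => x ^ (n + 1) * (3 - x))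
      (((n + 1 : ℕ) : ℝ) * x ^ n * (3 - x) + x ^ (n + 1) * (-1)) x :=
    (hasDerivAt_pow (n + 1) x).mul ((hasDerivAt_id x).const_sub 3)
  rw [hderiv.deriv]
  have hxn : 0 < x ^ n := pow_pos hx0 n
  have hn : (1 : ℝ) ≤ ((n + 1 : ℕ) : ℝ) := by exact_mod_cast hk
  rw [pow_succ]
  nlinarith [mul_pos hxn (sub_pos.mpr hx1)]

section RootR

variable {n : ℕ} {R : ℝ}

lemma three_fifths_le_of_root (hR : R ∈ Ioo 0 1)
    (hroot : 4 * (1 - R) - R ^ n * (1 - 2 * R + 5 * R ^ 2) = 0) : 3 / 5 ≤ R := by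
  have hpow : R ^ n ≤ 1 := pow_le_one₀ hR.1.le hR.2.le
  have hquad : 0 < 1 - 2 * R + 5 * R ^ 2 := by nlinarith [sq_nonneg (R - 1 / 5)]
  have hle : 4 * (1 - R) ≤ 1 - 2 * R + 5 * R ^ 2 := by
    nlinarith [mul_le_mul_of_nonneg_right hpow hquad.le]
  nlinarith [hR.1]

lemma two_mul_one_sub_le_pow_succ_mul (hR : R ∈ Ioo 0 1)
    (hroot : 4 * (1 - R) - R ^ n * (1 - 2 * R + 5 * R ^ 2) = 0) :
    2 * (1 - R) ≤ R ^ (n + 1) * (3 - R) := by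
  have h35 := three_fifths_le_of_root hR hroot
  have hpow : 0 ≤ R ^ n := pow_nonneg hR.1.le n
  rw [pow_succ]
  nlinarith [mul_nonneg hpow (mul_nonneg (by linarith : (0 : ℝ) ≤ 7 * R - 1)
    (by linarith [hR.2] : (0 : ℝ) ≤ 1 - R))]

end RootR

/-- For `k ≥ 2`, `S_k ≤ R_k`, where `S_k` is the root in `(0,1)` of
`2(1−r) − r^k(3−r) = 0` and `R_k` is the root in `(0,1)` of
`4(1−r) − r^{k−1}(1−2r+5r²) = 0`. -/
theorem bohr_stmt13 (k : ℕ) (hk : 2 ≤ k)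
    (S : ℝ) (hS : S ∈ Set.Ioo (0 : ℝ) 1)
    (hSroot : 2 * (1 - S) - S ^ k * (3 - S) = 0)
    (R : ℝ) (hR : R ∈ Set.Ioo (0 : ℝ) 1)
    (hRroot : 4 * (1 - R) - R ^ (k - 1) * (1 - 2 * R + 5 * R ^ 2) = 0) :
    S ≤ R := by
  obtain ⟨n, rfl⟩ : ∃ n, k = n + 1 := ⟨k - 1, by omega⟩
  rw [Nat.add_sub_cancel] at hRroot
  have hgR := two_mul_one_sub_le_pow_succ_mul hR hRroot
  by_contra! hRS
  have hgRS := strictMonoOn_pow_mul_three_sub (Nat.le_add_left 1 n)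
    (Ioo_subset_Icc_self hR) (Ioo_subset_Icc_self hS) hRS
  dsimp only at hgRS
  linarith
end

section
/- Let k ≥ 2. For each a ∈ (0,1], let ρ_k(a) be the unique root in (0,1) of (1+a)(1−r) − r^k[2a² + a + r(1−2a²)] = 0. Then a ↦ ρ_k(a) is a decreasing function of a on (0,1], and ρ_k(1) = S_k, the unique root in (0,1) of 2(1−r) − r^k(3−r) = 0. -/
/-!
Write `F_a(r) = (1+a)(1-r) - r^k(2a²+a+r(1-2a²))`. Regrouped as
`(1-r)(1+a-2a²r^k) - a r^k - r^(k+1)`, it is strictly decreasing in `r ∈ [0,1)` for every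
`a ∈ [0,1]`, so its root in `(0,1)` is unique. If `F_{a₁}(r) = 0` and `a₁ ≤ a₂`, solving the
equation for `r^k` shows that `F_{a₂}(r)` has the sign of `-(a₂-a₁)`, so the root for `a₂` lies to
the left of `r`. Finally `F_1(r) = 2(1-r) - r^k(3-r)`.
-/

def bohrPoly (k : ℕ) (a r : ℝ) : ℝ :=
  (1 + a) * (1 - r) - r ^ k * (2 * a ^ 2 + a + r * (1 - 2 * a ^ 2))

lemma bohrPoly_eq (k : ℕ) (a r : ℝ) :
    bohrPoly k a r = (1 - r) * (1 + a - 2 * a ^ 2 * r ^ k) - a * r ^ k - r ^ (k + 1) := by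
  unfold bohrPoly
  ring

lemma bohrPoly_strictAntiOn (k : ℕ) {a : ℝ} (ha₀ : 0 ≤ a) (ha₁ : a ≤ 1) :
    StrictAntiOn (bohrPoly k a) (Set.Ico 0 1) := by
  rintro s ⟨hs₀, -⟩ t ⟨ht₀, ht₁⟩ hst
  have hpow : s ^ k ≤ t ^ k := pow_le_pow_left₀ hs₀ hst.le k
  have hfactor : 0 ≤ 1 + a - 2 * a ^ 2 * t ^ k := by
    have : t ^ k ≤ 1 := pow_le_one₀ ht₀ ht₁.le
    nlinarith
  have hprod : (1 - t) * (1 + a - 2 * a ^ 2 * t ^ k) ≤ (1 - s) * (1 + a - 2 * a ^ 2 * s ^ k) :=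
    mul_le_mul (by linarith) (by nlinarith) hfactor (by linarith)
  have hlin : a * s ^ k ≤ a * t ^ k := mul_le_mul_of_nonneg_left hpow ha₀
  have hstrict : s ^ (k + 1) < t ^ (k + 1) := pow_lt_pow_left₀ hst hs₀ k.succ_ne_zero
  rw [bohrPoly_eq, bohrPoly_eq]
  linarith

lemma bohrPoly_nonpos_of_eq_zero (k : ℕ) {a₁ a₂ r : ℝ} (ha₁ : 0 ≤ a₁) (ha : a₁ ≤ a₂)
    (hr₀ : 0 < r) (hr₁ : r < 1) (hroot : bohrPoly k a₁ r = 0) : bohrPoly k a₂ r ≤ 0 := by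
  unfold bohrPoly at hroot ⊢
  set D := a₁ + r + 2 * a₁ ^ 2 * (1 - r)
  have hD : 0 < D := by positivity
  -- `hroot` reads `r^k * D = (1 + a₁)(1 - r)`; eliminate `r^k`
  have key : D * ((1 + a₂) * (1 - r) - r ^ k * (2 * a₂ ^ 2 + a₂ + r * (1 - 2 * a₂ ^ 2)))
      = -((a₂ - a₁) * (1 - r) ^ 2 * (1 + 2 * a₁ + 2 * a₂ + 2 * a₁ * a₂)) := by
    linear_combination (D + (a₂ - a₁) * (1 + 2 * (a₁ + a₂) * (1 - r))) * hroot
  have hrhs : 0 ≤ (a₂ - a₁) * (1 - r) ^ 2 * (1 + 2 * a₁ + 2 * a₂ + 2 * a₁ * a₂) := by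
    have : 0 ≤ a₂ - a₁ := by linarith
    have : 0 ≤ a₂ := by linarith
    positivity
  refine nonpos_of_mul_nonpos_left ?_ hD
  rw [mul_comm, key]
  linarith

theorem bohr_stmt14_general (k : ℕ) :
    (∀ a₁ a₂ : ℝ, a₁ ∈ Set.Ioc (0 : ℝ) 1 → a₂ ∈ Set.Ioc (0 : ℝ) 1 → a₁ ≤ a₂ →
      ∀ r₁ r₂ : ℝ, r₁ ∈ Set.Ioo (0 : ℝ) 1 → r₂ ∈ Set.Ioo (0 : ℝ) 1 →
      (1 + a₁) * (1 - r₁) - r₁ ^ k * (2 * a₁ ^ 2 + a₁ + r₁ * (1 - 2 * a₁ ^ 2)) = 0 →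
      (1 + a₂) * (1 - r₂) - r₂ ^ k * (2 * a₂ ^ 2 + a₂ + r₂ * (1 - 2 * a₂ ^ 2)) = 0 →
      r₂ ≤ r₁) ∧
    (∀ ρ S : ℝ, ρ ∈ Set.Ioo (0 : ℝ) 1 → S ∈ Set.Ioo (0 : ℝ) 1 →
      (1 + 1) * (1 - ρ) - ρ ^ k * (2 * 1 ^ 2 + 1 + ρ * (1 - 2 * 1 ^ 2)) = 0 →
      2 * (1 - S) - S ^ k * (3 - S) = 0 →
      ρ = S) := by
  constructor
  · rintro a₁ a₂ ⟨ha₁, -⟩ ⟨ha₂, ha₂'⟩ ha r₁ r₂ ⟨hr₁, hr₁'⟩ ⟨hr₂, hr₂'⟩ hroot₁ hroot₂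
    have hneg : bohrPoly k a₂ r₁ ≤ 0 :=
      bohrPoly_nonpos_of_eq_zero k ha₁.le ha hr₁ hr₁' hroot₁
    refine ((bohrPoly_strictAntiOn k ha₂.le ha₂').le_iff_ge ⟨hr₁.le, hr₁'⟩ ⟨hr₂.le, hr₂'⟩).1 ?_
    exact hneg.trans_eq hroot₂.symm
  · rintro ρ S ⟨hρ, hρ'⟩ ⟨hS, hS'⟩ hρroot hSroot
    have hSroot' : bohrPoly k 1 S = 0 := by
      unfold bohrPoly
      linear_combination hSroot
    exact (bohrPoly_strictAntiOn k zero_le_one le_rfl).injOn ⟨hρ.le, hρ'⟩ ⟨hS.le, hS'⟩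
      (hρroot.trans hSroot'.symm)

/-- For `k ≥ 2`, the radius `ρ_k(a)` is a decreasing function of `a ∈ (0,1]`, and
`ρ_k(1) = S_k` (the root in `(0,1)` of `2(1−r) − r^k(3−r) = 0`). Here `ρ_k(a)` is
characterized as a root in `(0,1)` of `(1+a)(1−r) − r^k(2a²+a+r(1−2a²)) = 0`. -/
theorem bohr_stmt14 (k : ℕ) (hk : 2 ≤ k) :
    (∀ a₁ a₂ : ℝ, a₁ ∈ Set.Ioc (0 : ℝ) 1 → a₂ ∈ Set.Ioc (0 : ℝ) 1 → a₁ ≤ a₂ →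
      ∀ r₁ r₂ : ℝ, r₁ ∈ Set.Ioo (0 : ℝ) 1 → r₂ ∈ Set.Ioo (0 : ℝ) 1 →
      (1 + a₁) * (1 - r₁) - r₁ ^ k * (2 * a₁ ^ 2 + a₁ + r₁ * (1 - 2 * a₁ ^ 2)) = 0 →
      (1 + a₂) * (1 - r₂) - r₂ ^ k * (2 * a₂ ^ 2 + a₂ + r₂ * (1 - 2 * a₂ ^ 2)) = 0 →
      r₂ ≤ r₁) ∧
    (∀ ρ S : ℝ, ρ ∈ Set.Ioo (0 : ℝ) 1 → S ∈ Set.Ioo (0 : ℝ) 1 →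
      (1 + 1) * (1 - ρ) - ρ ^ k * (2 * 1 ^ 2 + 1 + ρ * (1 - 2 * 1 ^ 2)) = 0 →
      2 * (1 - S) - S ^ k * (3 - S) = 0 →
      ρ = S) :=
  bohr_stmt14_general k
end
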